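/- Let H_{m−1} denote the top-left (m−1)×(m−1) submatrix of H (with det(λ·1_0 − H_0) interpreted as the constant polynomial 1 when m = 1), and let H_m^R denote the top-left m×m submatrix of H with its (m,m) entry z_m replaced by Δ = Re z_m. Then, as an identity of polynomials in λ, det(λ·1_n − H) = (γ² − t_m²)·det(λ·1_{m−1} − H_{m−1})² + det(λ·1_m − H_m^R)². -/

import Mathlib

/-!
The characteristic matrix of `H` is symmetric tridiagonal, so its determinant is a continuant.
Cutting the continuant between sites `m` and `m + 1` gives `det (λ - H) = p p̃ - t_m² p' p̃'`,
where `p, p'` are the characteristic polynomials of the top-left blocks of sizes `m, m - 1` and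
`p̃, p̃'` those of the bottom-right blocks. Read backwards, the bottom-right blocks are the
complex conjugates of the top-left ones, so `p̃ = conj p` and `p̃' = conj p' = p'`. Finally the
continuant is affine in its last diagonal entry, so `p = q - iγ p'` with `q` the (real)
characteristic polynomial of `H_m^R`, whence `p · conj p = q² + γ² p'²`.
-/

open Matrix Complex

/-- The `2m × 2m` tridiagonal Hamiltonian with diagonal entries `z 1, …, z n`
(1-based) and symmetric off-diagonal entries `t 1, …, t (n-1)`. -/
noncomputable def Hop (m : ℕ) (t : ℕ → ℝ) (z : ℕ → ℂ) :
    Matrix (Fin (2*m)) (Fin (2*m)) ℂ :=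
  fun i j =>
    if (i : ℕ) = (j : ℕ) then z ((i : ℕ) + 1)
    else if (i : ℕ) + 1 = (j : ℕ) then ((t ((i : ℕ) + 1) : ℝ) : ℂ)
    else if (j : ℕ) + 1 = (i : ℕ) then ((t ((j : ℕ) + 1) : ℝ) : ℂ)
    else 0

/-- The block matrix `M(Z) = [[1, (conj Z / t_m) P_m],[(Z / t_m) P_m, 1]]`. -/
noncomputable def Mop (m : ℕ) (t : ℕ → ℝ) (Z : ℂ) :
    Matrix (Fin (2*m)) (Fin (2*m)) ℂ :=
  fun i j =>
    if i = j then 1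
    else if (i : ℕ) + (j : ℕ) + 1 = 2*m then
      (if (i : ℕ) < m then (starRingEnd ℂ) Z / (t m : ℂ) else Z / (t m : ℂ))
    else 0

/-- The top-left `(m−1) × (m−1)` submatrix of `H`. -/
noncomputable def HopSub (m : ℕ) (t : ℕ → ℝ) (z : ℕ → ℂ) :
    Matrix (Fin (m-1)) (Fin (m-1)) ℂ :=
  (Hop m t z).submatrix (Fin.castLE (by omega)) (Fin.castLE (by omega))

/-- The top-left `m × m` submatrix of `H` with its `(m,m)` entry `z m`
replaced by `Δ = Re (z m)`. -/
noncomputable def HmR (m : ℕ) (t : ℕ → ℝ) (z : ℕ → ℂ) :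
    Matrix (Fin m) (Fin m) ℂ :=
  fun i j =>
    if (i : ℕ) = m - 1 ∧ (j : ℕ) = m - 1 then (((z m).re : ℝ) : ℂ)
    else Hop m t z (Fin.castLE (by omega) i) (Fin.castLE (by omega) j)

open Polynomial

section Tridiagonal

variable {R S : Type*} [CommRing R] [CommRing S]

def tridiag (d e : ℕ → R) (n : ℕ) : Matrix (Fin n) (Fin n) R :=
  fun i j =>
    if (i : ℕ) = (j : ℕ) then d i
    else if (i : ℕ) + 1 = (j : ℕ) then e i
    else if (j : ℕ) + 1 = (i : ℕ) then e j
    else 0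

variable (d e : ℕ → R)

theorem tridiag_apply_eq_zero {n : ℕ} {i j : Fin n} (h : (i : ℕ) + 1 < j ∨ (j : ℕ) + 1 < i) :
    tridiag d e n i j = 0 := by
  simp only [tridiag]
  split_ifs <;> first | rfl | omega

theorem tridiag_apply_of_val_eq_succ {n : ℕ} {i j : Fin n} (h : (i : ℕ) = j + 1) :
    tridiag d e n i j = e j := by
  simp only [tridiag]
  split_ifs <;> first | rfl | omega

theorem tridiag_submatrix_castSucc (n : ℕ) :
    (tridiag d e (n + 1)).submatrix Fin.castSucc Fin.castSucc = tridiag d e n :=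
  rfl

theorem det_tridiag_succ_succ (n : ℕ) :
    (tridiag d e (n + 2)).det =
      d (n + 1) * (tridiag d e (n + 1)).det - e n ^ 2 * (tridiag d e n).det := by
  have hminor : ((tridiag d e (n + 2)).submatrix Fin.castSucc
      (Fin.last n).castSucc.succAbove).det = e n * (tridiag d e n).det := by
    rw [det_succ_column _ (Fin.last n), Fin.sum_univ_castSucc, Finset.sum_eq_zero, zero_add]
    · have : ((tridiag d e (n + 2)).submatrix Fin.castSucc
          (Fin.last n).castSucc.succAbove).submatrix (Fin.last n).succAbove
          (Fin.last n).succAbove = tridiag d e n := by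
        ext i j
        simp [tridiag, Fin.succAbove_castSucc_of_lt _ _ j.castSucc_lt_last]
      rw [this]
      simp [tridiag, ← two_mul]
    · intro i _
      rw [submatrix_apply, Fin.succAbove_castSucc_self, tridiag_apply_eq_zero _ _ (by simp),
        mul_zero, zero_mul]
  rw [det_succ_row _ (Fin.last (n + 1)), Fin.sum_univ_castSucc, Fin.sum_univ_castSucc,
    Finset.sum_eq_zero, zero_add, Fin.succAbove_last, hminor, tridiag_submatrix_castSucc,
    tridiag_apply_of_val_eq_succ _ _ (by simp)]
  · have hdiag : tridiag d e (n + 2) (Fin.last (n + 1)) (Fin.last (n + 1)) = d (n + 1) :=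
      if_pos rfl
    simp only [Fin.val_last, Fin.val_castSucc, hdiag, Odd.neg_one_pow (⟨n, by ring⟩ : Odd (n + 1 + n)),
      Even.neg_one_pow (⟨n + 1, rfl⟩ : Even (n + 1 + (n + 1)))]
    ring
  · intro j _
    rw [tridiag_apply_eq_zero _ _ (by simp), mul_zero, zero_mul]

@[simp]
theorem det_tridiag_zero : (tridiag d e 0).det = 1 :=
  det_fin_zero

@[simp]
theorem det_tridiag_one : (tridiag d e 1).det = d 0 := by
  simp [tridiag]

variable {d e} in
theorem tridiag_congr {d' e' : ℕ → R} {n : ℕ} (hd : ∀ i < n, d i = d' i)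
    (he : ∀ i, i + 1 < n → e i = e' i) : tridiag d e n = tridiag d' e' n := by
  ext i j
  have := i.isLt
  have := j.isLt
  simp only [tridiag]
  split_ifs <;> first | rfl | (apply hd; omega) | (apply he; omega)

theorem tridiag_map (f : R →+* S) (n : ℕ) :
    (tridiag d e n).map f = tridiag (fun i => f (d i)) (fun i => f (e i)) n := by
  ext i j
  simp only [map_apply, tridiag]
  split_ifs <;> simp

theorem det_tridiag_rev (n : ℕ) :
    (tridiag d e n).det = (tridiag (fun i => d (n - 1 - i)) (fun i => e (n - 2 - i)) n).det := by
  rw [← det_submatrix_equiv_self Fin.revPerm]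
  congr 1
  ext i j
  simp only [submatrix_apply, Fin.revPerm_apply, tridiag, Fin.val_rev]
  split_ifs <;> first | rfl | omega | (congr 1; omega)

theorem det_tridiag_update_last (k : ℕ) (x : R) :
    (tridiag (Function.update d k x) e (k + 1)).det =
      (tridiag d e (k + 1)).det + (x - d k) * (tridiag d e k).det := by
  have hbelow : ∀ n ≤ k, tridiag (Function.update d k x) e n = tridiag d e n := fun n hn =>
    tridiag_congr (fun i hi => Function.update_of_ne (by omega) _ _) (fun _ _ => rfl)
  cases k with
  | zero =>
    rw [det_tridiag_one, det_tridiag_one, det_tridiag_zero, Function.update_self]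
    ring
  | succ k =>
    rw [det_tridiag_succ_succ, det_tridiag_succ_succ, hbelow _ le_rfl, hbelow _ k.le_succ,
      Function.update_self]
    ring

theorem det_tridiag_add (p q : ℕ) :
    (tridiag d e (p + 1 + (q + 1))).det =
      (tridiag d e (p + 1)).det *
          (tridiag (fun i => d (i + (p + 1))) (fun i => e (i + (p + 1))) (q + 1)).det -
        e p ^ 2 * (tridiag d e p).det *
          (tridiag (fun i => d (i + (p + 2))) (fun i => e (i + (p + 2))) q).det := by
  induction q using Nat.twoStepInduction with
  | zero =>
    rw [det_tridiag_succ_succ, det_tridiag_one, det_tridiag_zero, zero_add]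
    ring
  | one =>
    rw [det_tridiag_succ_succ, det_tridiag_succ_succ, det_tridiag_succ_succ, det_tridiag_one,
      det_tridiag_one, det_tridiag_zero]
    ring_nf
  | more n ih₀ ih₁ =>
    rw [show p + 1 + (n + 2 + 1) = p + 1 + (n + 1) + 2 by ring, det_tridiag_succ_succ,
      show p + 1 + (n + 1) + 1 = p + 1 + (n + 1 + 1) from rfl, ih₀, ih₁,
      show n + 2 + 1 = n + 1 + 2 from rfl, det_tridiag_succ_succ _ _ (n + 1),
      det_tridiag_succ_succ (fun i => d (i + (p + 2))) _ n]
    ring_nf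

theorem charpoly_tridiag (n : ℕ) :
    (tridiag d e n).charpoly = (tridiag (fun i => X - C (d i)) (fun i => -C (e i)) n).det := by
  rw [charpoly]
  congr 1
  ext i j
  by_cases hij : i = j
  · subst hij
    simp [tridiag]
  · rw [charmatrix_apply_ne _ _ _ hij]
    simp only [tridiag, Fin.val_eq_val, hij, if_false]
    split_ifs <;> simp

variable {d e} in
theorem det_tridiag_shift_eq_map (f : R →+* S) {d' e' : ℕ → S} (k s : ℕ)
    (hd : ∀ i < k, d' (k + s - 1 - i) = f (d i))
    (he : ∀ i, i + 1 < k → e' (k + s - 2 - i) = f (e i)) :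
    (tridiag (fun i => d' (i + s)) (fun i => e' (i + s)) k).det = f (tridiag d e k).det := by
  rw [det_tridiag_rev, RingHom.map_det, RingHom.mapMatrix_apply, tridiag_map]
  refine congrArg det (tridiag_congr (fun i hi => ?_) (fun i hi => ?_))
  · rw [← hd i hi]; congr 1; omega
  · rw [← he i hi]; congr 1; omega

theorem charpoly_tridiag_two_mul (σ : R →+* R) (n : ℕ)
    (hd : ∀ i ≤ n, d (2 * n + 1 - i) = σ (d i)) (he : ∀ i < n, e (2 * n - i) = σ (e i)) :
    (tridiag d e (2 * (n + 1))).charpoly =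
      (tridiag d e (n + 1)).charpoly * (tridiag d e (n + 1)).charpoly.map σ -
        C (e n) ^ 2 * (tridiag d e n).charpoly * (tridiag d e n).charpoly.map σ := by
  simp only [charpoly_tridiag, ← coe_mapRingHom]
  rw [two_mul, det_tridiag_add,
    det_tridiag_shift_eq_map (mapRingHom σ) (d' := fun i => X - C (d i))
      (e' := fun i => -C (e i)) (n + 1) (n + 1),
    det_tridiag_shift_eq_map (mapRingHom σ) (d' := fun i => X - C (d i))
      (e' := fun i => -C (e i)) n (n + 2)]
  · ring
  all_goals
    intro i hi
    simp only [coe_mapRingHom, Polynomial.map_sub, Polynomial.map_neg, map_X, map_C]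
    first
    | rw [← hd i (by omega)]; congr 3; omega
    | rw [← he i (by omega)]; congr 3; omega

theorem charpoly_tridiag_update_last (k : ℕ) (x : R) :
    (tridiag (Function.update d k x) e (k + 1)).charpoly =
      (tridiag d e (k + 1)).charpoly + C (d k - x) * (tridiag d e k).charpoly := by
  have : (fun i => X - C (Function.update d k x i)) =
      Function.update (fun i => X - C (d i)) k (X - C x) :=
    funext (Function.apply_update (fun _ y => X - C y) d k x)
  simp only [charpoly_tridiag, this, det_tridiag_update_last, map_sub]
  ring

variable {d e} in
theorem charpoly_tridiag_map_eq_self (σ : R →+* R) {n : ℕ} (hd : ∀ i < n, σ (d i) = d i)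
    (he : ∀ i, i + 1 < n → σ (e i) = e i) :
    (tridiag d e n).charpoly.map σ = (tridiag d e n).charpoly := by
  rw [← charpoly_map, tridiag_map, tridiag_congr hd he]

variable {d e} in
theorem charpoly_tridiag_two_mul_eq_sq_add_sq (σ : R →+* R) (k : ℕ) (x : R)
    (hd : ∀ i ≤ k, d (2 * k + 1 - i) = σ (d i)) (he : ∀ i < k, e (2 * k - i) = σ (e i))
    (hd_fix : ∀ i < k, σ (d i) = d i) (he_fix : ∀ i < k, σ (e i) = e i) (hx : σ x = x)
    (hdx : σ (d k - x) = -(d k - x)) :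
    (tridiag d e (2 * (k + 1))).charpoly =
      C (-(d k - x) ^ 2 - e k ^ 2) * (tridiag d e k).charpoly ^ 2 +
        (tridiag (Function.update d k x) e (k + 1)).charpoly ^ 2 := by
  have hq := charpoly_tridiag_map_eq_self σ (d := Function.update d k x) (e := e) (n := k + 1)
    (fun i hi => by
      rcases eq_or_ne i k with rfl | hik
      · simpa using hx
      · simp only [Function.update_of_ne hik, hd_fix i (by omega)])
    (fun i hi => he_fix i (by omega))
  have hp' := charpoly_tridiag_map_eq_self σ hd_fix (fun i hi => he_fix i (by omega))
  rw [charpoly_tridiag_two_mul d e σ k hd he]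
  have hupdate := charpoly_tridiag_update_last d e k x
  set p := (tridiag d e (k + 1)).charpoly
  set p' := (tridiag d e k).charpoly
  set q := (tridiag (Function.update d k x) e (k + 1)).charpoly
  have hp : p = q - C (d k - x) * p' := by rw [hupdate]; ring
  have hp_map : p.map σ = q + C (d k - x) * p' := by
    rw [hp, Polynomial.map_sub, Polynomial.map_mul, map_C, hq, hp', hdx, map_neg, neg_mul,
      sub_neg_eq_add]
  rw [hp_map, hp', hp]
  simp only [map_sub, map_neg, map_pow]
  ring

end Tridiagonal

section Hamiltonian

variable (m : ℕ) (t : ℕ → ℝ) (z : ℕ → ℂ)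

theorem Hop_eq_tridiag :
    Hop m t z = tridiag (fun i => z (i + 1)) (fun i => (t (i + 1) : ℂ)) (2 * m) :=
  rfl

theorem HopSub_eq_tridiag :
    HopSub m t z = tridiag (fun i => z (i + 1)) (fun i => (t (i + 1) : ℂ)) (m - 1) :=
  rfl

theorem HmR_eq_tridiag :
    HmR m t z = tridiag (Function.update (fun i => z (i + 1)) (m - 1) ((z m).re : ℂ))
      (fun i => (t (i + 1) : ℂ)) m := by
  ext i j
  have := i.isLt
  simp only [HmR, Hop, tridiag, Fin.val_castLE, Function.update_apply]
  split_ifs <;> first | rfl | omega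

end Hamiltonian

theorem stmt7 (m : ℕ) (hm : 1 ≤ m) (t : ℕ → ℝ) (z : ℕ → ℂ)
    (htsym : ∀ j, 1 ≤ j → j ≤ 2*m - 1 → t j = t (2*m - j))
    (hzreal : ∀ j, 1 ≤ j → j ≤ 2*m → j ≠ m → j ≠ m + 1 → (z j).im = 0)
    (hzsym : ∀ j, 1 ≤ j → j ≤ 2*m → z (2*m + 1 - j) = (starRingEnd ℂ) (z j)) :
    (Hop m t z).charpoly =
      Polynomial.C ((((z m).im^2 - (t m)^2 : ℝ)) : ℂ) * (HopSub m t z).charpoly ^ 2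
        + (HmR m t z).charpoly ^ 2 := by
  obtain ⟨k, rfl⟩ : ∃ k, m = k + 1 := ⟨m - 1, by omega⟩
  have him : z (k + 1) - (z (k + 1)).re = (z (k + 1)).im * I := by
    apply Complex.ext <;> simp
  rw [Hop_eq_tridiag, HopSub_eq_tridiag, HmR_eq_tridiag, Nat.add_sub_cancel,
    charpoly_tridiag_two_mul_eq_sq_add_sq (starRingEnd ℂ) k ((z (k + 1)).re : ℂ)]
  · congr 3
    rw [him]
    push_cast
    linear_combination -((z (k + 1)).im : ℂ) ^ 2 * I_sq
  · intro i hi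
    rw [← hzsym (i + 1) (by omega) (by omega)]
    congr 1
    omega
  · intro i hi
    rw [conj_ofReal, htsym (i + 1) (by omega) (by omega)]
    congr 3
    omega
  · exact fun i hi =>
      conj_eq_iff_im.mpr (hzreal (i + 1) (by omega) (by omega) (by omega) (by omega))
  · exact fun i _ => conj_ofReal _
  · exact conj_ofReal _
  · rw [him, map_mul, conj_ofReal, conj_I, mul_neg]
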